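/- arXiv:2304.11417 — 3 statements merged into one kernel-verified Lean document; each statement's English description precedes it below -/
import Mathlib

section
/- Let G be a second-countable, locally compact, unimodular topological group with Haar measure μ, let (π,H) be a unitary representation of G, let d be a natural number, and let (S_r)_{r>0} be a family of measurable subsets of G with μ(S_r) < ∞ and S_r⁻¹ = S_r for every r. Let V ⊆ H be a ℂ-linear subspace, let A : H → H be a ℂ-linear map with A(V) ⊆ V, and let D : H×H×H×H → ℂ be a function such that for all v₁, v₂, v₃, v₄ ∈ V the quantity r^{-d} ∫_{S_r} ⟨π(g)v₁,v₂⟩ · conj(⟨π(g)v₃,v₄⟩) dμ(g) tends to D(v₁,v₂,v₃,v₄) as r → ∞. If D(Av₁, v₂, v₃, v₄) = -D(v₁, v₂, Av₃, v₄) for all v₁, v₂, v₃, v₄ ∈ V, then D(v₁, Av₂, v₃, v₄) = -D(v₁, v₂, v₃, Av₄) for all v₁, v₂, v₃, v₄ ∈ V. -/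
open MeasureTheory Filter ComplexConjugate
open scoped InnerProductSpace ENNReal Topology

/-!
Substituting `g ↦ g⁻¹` in the integral over the symmetric set `S_r` and using unitarity,
`⟨π(g⁻¹)v₁, v₂⟩ = conj ⟨π(g)v₂, v₁⟩`, shows that `D(v₁,v₂,v₃,v₄) = D(v₄,v₃,v₂,v₁)`.
Under this symmetry the claim `D(v₁,Av₂,v₃,v₄) = -D(v₁,v₂,v₃,Av₄)` becomes the hypothesis
`D(Av₄,v₃,v₂,v₁) = -D(v₄,v₃,Av₂,v₁)`.
-/

theorem setIntegral_comp_inv {G E : Type*} [Group G] [MeasurableSpace G] [MeasurableInv G]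
    [NormedAddCommGroup E] [NormedSpace ℝ E] (μ : Measure G) [μ.IsInvInvariant]
    (S : Set G) (f : G → E) :
    ∫ g in S⁻¹, f g⁻¹ ∂μ = ∫ g in S, f g ∂μ := by
  have hmap : (μ.restrict S⁻¹).map (MeasurableEquiv.inv G) = μ.restrict S := by
    conv_rhs => rw [← Measure.map_inv_eq_self μ]
    exact ((MeasurableEquiv.inv G).restrict_map μ S).symm
  rw [← hmap, integral_map_equiv]
  rfl

section UnitaryCoefficients

variable {G H : Type*} [Group G] [NormedAddCommGroup H] [InnerProductSpace ℂ H]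
  (π : G →* (H →L[ℂ] H)) (hunit : ∀ (g : G) (u w : H), ⟪π g u, π g w⟫_ℂ = ⟪u, w⟫_ℂ)
include hunit

theorem inner_apply_inv_eq_conj (g : G) (v w : H) :
    ⟪v, π g⁻¹ w⟫_ℂ = conj ⟪w, π g v⟫_ℂ := by
  have hw : π g (π g⁻¹ w) = w := by
    show (π g * π g⁻¹) w = w
    rw [← map_mul, mul_inv_cancel, map_one]
    rfl
  rw [← hunit g, hw, inner_conj_symm]

theorem setIntegral_inner_mul_conj_inner_of_inv_eq [MeasurableSpace G] [MeasurableInv G]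
    (μ : Measure G) [μ.IsInvInvariant] {S : Set G} (hS : S⁻¹ = S) (v₁ v₂ v₃ v₄ : H) :
    ∫ g in S, ⟪v₂, π g v₁⟫_ℂ * conj ⟪v₄, π g v₃⟫_ℂ ∂μ =
      ∫ g in S, ⟪v₃, π g v₄⟫_ℂ * conj ⟪v₁, π g v₂⟫_ℂ ∂μ := by
  conv_lhs => rw [← setIntegral_comp_inv μ S, hS]
  simp only [inner_apply_inv_eq_conj π hunit, Complex.conj_conj, mul_comm]

end UnitaryCoefficients

theorem stmt1_general {G H : Type*} [Group G] [TopologicalSpace G] [IsTopologicalGroup G]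
    [MeasurableSpace G] [BorelSpace G]
    (μ : Measure G) [μ.IsInvInvariant]
    [NormedAddCommGroup H] [InnerProductSpace ℂ H]
    (π : G →* (H →L[ℂ] H))
    (hunit : ∀ (g : G) (u w : H), ⟪π g u, π g w⟫_ℂ = ⟪u, w⟫_ℂ)
    (d : ℕ) (S : ℝ → Set G)
    (hSinv : ∀ r > (0 : ℝ), (S r)⁻¹ = S r)
    (V : Submodule ℂ H) (A : H →ₗ[ℂ] H) (hAV : ∀ v ∈ V, A v ∈ V)
    (D : H → H → H → H → ℂ)
    (hlim : ∀ v₁ ∈ V, ∀ v₂ ∈ V, ∀ v₃ ∈ V, ∀ v₄ ∈ V,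
      Tendsto (fun r : ℝ =>
          (r ^ d)⁻¹ • ∫ g in S r, ⟪v₂, π g v₁⟫_ℂ * conj ⟪v₄, π g v₃⟫_ℂ ∂μ)
        atTop (𝓝 (D v₁ v₂ v₃ v₄)))
    (hD : ∀ v₁ ∈ V, ∀ v₂ ∈ V, ∀ v₃ ∈ V, ∀ v₄ ∈ V,
      D (A v₁) v₂ v₃ v₄ = -D v₁ v₂ (A v₃) v₄) :
    ∀ v₁ ∈ V, ∀ v₂ ∈ V, ∀ v₃ ∈ V, ∀ v₄ ∈ V,
      D v₁ (A v₂) v₃ v₄ = -D v₁ v₂ v₃ (A v₄) := by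
  have hsymm : ∀ v₁ ∈ V, ∀ v₂ ∈ V, ∀ v₃ ∈ V, ∀ v₄ ∈ V,
      D v₁ v₂ v₃ v₄ = D v₄ v₃ v₂ v₁ := by
    intro v₁ h₁ v₂ h₂ v₃ h₃ v₄ h₄
    refine tendsto_nhds_unique ((hlim v₁ h₁ v₂ h₂ v₃ h₃ v₄ h₄).congr' ?_)
      (hlim v₄ h₄ v₃ h₃ v₂ h₂ v₁ h₁)
    filter_upwards [eventually_gt_atTop 0] with r hr
    rw [setIntegral_inner_mul_conj_inner_of_inv_eq π hunit μ (hSinv r hr)]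
  intro v₁ h₁ v₂ h₂ v₃ h₃ v₄ h₄
  rw [hsymm v₁ h₁ (A v₂) (hAV v₂ h₂) v₃ h₃ v₄ h₄, hsymm v₁ h₁ v₂ h₂ v₃ h₃ (A v₄) (hAV v₄ h₄),
    hD v₄ h₄ v₃ h₃ v₂ h₂ v₁ h₁, neg_neg]

/-- (Abstract form of Lemma 4.1.) If the limits
`D(v₁,v₂,v₃,v₄) = lim_{r→∞} r^{-d} ∫_{S_r} ⟨π(g)v₁,v₂⟩ conj ⟨π(g)v₃,v₄⟩ dμ` exist on a
subspace `V` preserved by a linear map `A`, and `D(Av₁,v₂,v₃,v₄) = -D(v₁,v₂,Av₃,v₄)` on `V`,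
then also `D(v₁,Av₂,v₃,v₄) = -D(v₁,v₂,v₃,Av₄)` on `V`. The paper's inner product `⟨x,y⟩`,
linear in the first variable, is rendered as Mathlib's `⟪y, x⟫_ℂ`. -/
theorem stmt1 {G H : Type*} [Group G] [TopologicalSpace G] [IsTopologicalGroup G]
    [LocallyCompactSpace G] [SecondCountableTopology G]
    [MeasurableSpace G] [BorelSpace G]
    (μ : Measure G) [μ.IsHaarMeasure] [μ.IsInvInvariant]
    [NormedAddCommGroup H] [InnerProductSpace ℂ H]
    (π : G →* (H →L[ℂ] H))
    (hunit : ∀ (g : G) (u w : H), ⟪π g u, π g w⟫_ℂ = ⟪u, w⟫_ℂ)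
    (hcont : ∀ u : H, Continuous fun g : G => π g u)
    (d : ℕ) (S : ℝ → Set G)
    (hSmeas : ∀ r > (0 : ℝ), MeasurableSet (S r))
    (hSfin : ∀ r > (0 : ℝ), μ (S r) < ∞)
    (hSinv : ∀ r > (0 : ℝ), (S r)⁻¹ = S r)
    (V : Submodule ℂ H) (A : H →ₗ[ℂ] H) (hAV : ∀ v ∈ V, A v ∈ V)
    (D : H → H → H → H → ℂ)
    (hlim : ∀ v₁ ∈ V, ∀ v₂ ∈ V, ∀ v₃ ∈ V, ∀ v₄ ∈ V,
      Tendsto (fun r : ℝ =>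
          (r ^ d)⁻¹ • ∫ g in S r, ⟪v₂, π g v₁⟫_ℂ * conj ⟪v₄, π g v₃⟫_ℂ ∂μ)
        atTop (𝓝 (D v₁ v₂ v₃ v₄)))
    (hD : ∀ v₁ ∈ V, ∀ v₂ ∈ V, ∀ v₃ ∈ V, ∀ v₄ ∈ V,
      D (A v₁) v₂ v₃ v₄ = -D v₁ v₂ (A v₃) v₄) :
    ∀ v₁ ∈ V, ∀ v₂ ∈ V, ∀ v₃ ∈ V, ∀ v₄ ∈ V,
      D v₁ (A v₂) v₃ v₄ = -D v₁ v₂ v₃ (A v₄) :=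
  stmt1_general μ π hunit d S hSinv V A hAV D hlim hD
end

section
/- Let G be a second-countable, locally compact topological group with Haar measure μ, let (π,H) be a unitary representation of G, let d be a natural number, and let (S_r)_{r>0} be a family of measurable subsets of G with μ(S_r) < ∞ for every r. Let V ⊆ H be a ℂ-linear subspace and suppose that for all v, w ∈ V the limit lim_{r→∞} r^{-d} ∫_{S_r} |⟨π(g)v, w⟩|² dμ(g) exists in ℂ. Then for all v₁, v₂, v₃, v₄ ∈ V the limit D(v₁,v₂,v₃,v₄) := lim_{r→∞} r^{-d} ∫_{S_r} ⟨π(g)v₁,v₂⟩ · conj(⟨π(g)v₃,v₄⟩) dμ(g) exists; moreover the resulting function D is ℂ-linear in v₁ and in v₄, and conjugate-linear in v₂ and in v₃. -/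
/-!
Pointwise, `φ_{v₁,v₂} · conj φ_{v₃,v₄}` is a fixed linear combination of the sixteen functions
`|φ_{v₁ + iᵃ v₃, v₂ + iᵇ v₄}|²` (double polarisation of the sesquilinear map `(v, w) ↦ φ_{v,w}`).
Matrix coefficients of a unitary representation are bounded and continuous, hence integrable on
sets of finite measure, so the normalised integrals over `S r` are linear in the integrand and
the mixed limit is the same combination of the squared-modulus limits. The (sesqui)linearity
of the integrand in each variable passes to the limit by uniqueness of limits.
-/

open MeasureTheory Filter ComplexConjugate
open scoped InnerProductSpace ENNReal Topology
open Complex (I)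
open Finset (range)

theorem Complex.mul_conj_eq_sum_norm_sq (x y z t : ℂ) :
    x * conj t = 16⁻¹ * ∑ a ∈ range 4, ∑ b ∈ range 4, I ^ a * conj (I ^ b) *
      (‖x + I ^ a * y + conj (I ^ b) * z + I ^ a * conj (I ^ b) * t‖ : ℂ) ^ 2 := by
  simp only [← Complex.mul_conj']
  simp only [Finset.sum_range_succ, Finset.sum_range_zero, pow_succ, pow_zero, one_mul,
    Complex.I_mul_I, map_add, map_mul, map_neg, map_one, Complex.conj_I, neg_mul, mul_neg,
    neg_neg, zero_add]
  ring_nf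
  simp only [Complex.I_sq]
  ring

section Polarization

variable {E F : Type*} [NormedAddCommGroup E] [InnerProductSpace ℂ E]
  [NormedAddCommGroup F] [InnerProductSpace ℂ F]

theorem inner_mul_conj_inner_eq_sum_norm_sq (T : E →L[ℂ] F) (v₁ v₃ : E) (v₂ v₄ : F) :
    ⟪v₂, T v₁⟫_ℂ * conj ⟪v₄, T v₃⟫_ℂ = 16⁻¹ * ∑ a ∈ range 4, ∑ b ∈ range 4,
      I ^ a * conj (I ^ b) * (‖⟪v₂ + I ^ b • v₄, T (v₁ + I ^ a • v₃)⟫_ℂ‖ : ℂ) ^ 2 := by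
  have expand (a b : ℕ) : ⟪v₂ + I ^ b • v₄, T (v₁ + I ^ a • v₃)⟫_ℂ = ⟪v₂, T v₁⟫_ℂ +
      I ^ a * ⟪v₂, T v₃⟫_ℂ + conj (I ^ b) * ⟪v₄, T v₁⟫_ℂ + I ^ a * conj (I ^ b) * ⟪v₄, T v₃⟫_ℂ := by
    simp only [map_add, map_smul, inner_add_left, inner_add_right, inner_smul_left,
      inner_smul_right]
    ring
  simp only [expand]
  exact Complex.mul_conj_eq_sum_norm_sq ..

end Polarization

section SetIntegralLimits

variable {α G 𝕜 : Type*} [MeasurableSpace G] [RCLike 𝕜] {μ : Measure G} {S : α → Set G}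
  {ρ : α → ℝ} {l : Filter α}

theorem Filter.Tendsto.smul_setIntegral_const_mul {f : G → 𝕜} {L : 𝕜} (c : 𝕜)
    (h : Tendsto (fun r => ρ r • ∫ g in S r, f g ∂μ) l (𝓝 L)) :
    Tendsto (fun r => ρ r • ∫ g in S r, c * f g ∂μ) l (𝓝 (c * L)) := by
  simpa only [integral_const_mul, mul_smul_comm] using h.const_mul c

theorem Filter.Tendsto.smul_setIntegral_add {f₁ f₂ : G → 𝕜} {L₁ L₂ : 𝕜}
    (hf₁ : ∀ᶠ r in l, IntegrableOn f₁ (S r) μ) (hf₂ : ∀ᶠ r in l, IntegrableOn f₂ (S r) μ)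
    (h₁ : Tendsto (fun r => ρ r • ∫ g in S r, f₁ g ∂μ) l (𝓝 L₁))
    (h₂ : Tendsto (fun r => ρ r • ∫ g in S r, f₂ g ∂μ) l (𝓝 L₂)) :
    Tendsto (fun r => ρ r • ∫ g in S r, f₁ g + f₂ g ∂μ) l (𝓝 (L₁ + L₂)) := by
  refine (h₁.add h₂).congr' ?_
  filter_upwards [hf₁, hf₂] with r hr₁ hr₂
  rw [integral_add hr₁ hr₂, smul_add]

theorem tendsto_smul_setIntegral_finsetSum {ι : Type*} (s : Finset ι) {F : ι → G → 𝕜}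
    {L : ι → 𝕜} (hF : ∀ i ∈ s, ∀ᶠ r in l, IntegrableOn (F i) (S r) μ)
    (h : ∀ i ∈ s, Tendsto (fun r => ρ r • ∫ g in S r, F i g ∂μ) l (𝓝 (L i))) :
    Tendsto (fun r => ρ r • ∫ g in S r, ∑ i ∈ s, F i g ∂μ) l (𝓝 (∑ i ∈ s, L i)) := by
  refine (tendsto_finsetSum s h).congr' ?_
  filter_upwards [(eventually_all_finset s).2 hF] with r hr
  rw [integral_finsetSum s hr, Finset.smul_sum]

theorem eq_mul_add_of_tendsto_smul_setIntegral [l.NeBot] {f f₁ f₂ : G → 𝕜} {L L₁ L₂ : 𝕜}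
    (c : 𝕜) (hf : ∀ g, f g = c * f₁ g + f₂ g)
    (hf₁ : ∀ᶠ r in l, IntegrableOn f₁ (S r) μ) (hf₂ : ∀ᶠ r in l, IntegrableOn f₂ (S r) μ)
    (h : Tendsto (fun r => ρ r • ∫ g in S r, f g ∂μ) l (𝓝 L))
    (h₁ : Tendsto (fun r => ρ r • ∫ g in S r, f₁ g ∂μ) l (𝓝 L₁))
    (h₂ : Tendsto (fun r => ρ r • ∫ g in S r, f₂ g ∂μ) l (𝓝 L₂)) :
    L = c * L₁ + L₂ := by
  refine tendsto_nhds_unique h ?_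
  simp only [hf]
  exact (h₁.smul_setIntegral_const_mul c).smul_setIntegral_add
    (hf₁.mono fun _ hr => hr.const_mul c) hf₂ h₂

end SetIntegralLimits

section MixedLimit

variable {α G E F : Type*} [MeasurableSpace G] [NormedAddCommGroup E] [InnerProductSpace ℂ E]
  [NormedAddCommGroup F] [InnerProductSpace ℂ F]

/-- The paper's `D`, for the matrix coefficients `φ_{v,w}(g) = ⟪w, T g v⟫`; a junk value
(`limUnder`) where the limit does not exist. -/
noncomputable def mixedLimit (μ : Measure G) (T : G → E →L[ℂ] F) (S : α → Set G) (ρ : α → ℝ)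
    (l : Filter α) (v₁ : E) (v₂ : F) (v₃ : E) (v₄ : F) : ℂ :=
  limUnder l fun r => ρ r • ∫ g in S r, ⟪v₂, T g v₁⟫_ℂ * conj ⟪v₄, T g v₃⟫_ℂ ∂μ

theorem integrableOn_inner_mul_conj_inner [TopologicalSpace G] [OpensMeasurableSpace G]
    {μ : Measure G} {T : G → E →L[ℂ] F} {C : ℝ} (hcont : ∀ v, Continuous fun g => T g v)
    (hT : ∀ g, ‖T g‖ ≤ C) {s : Set G} (hs : μ s < ∞) (v₁ v₃ : E) (v₂ v₄ : F) :
    IntegrableOn (fun g => ⟪v₂, T g v₁⟫_ℂ * conj ⟪v₄, T g v₃⟫_ℂ) s μ := by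
  have hbound (v : E) (w : F) (g : G) : ‖⟪w, T g v⟫_ℂ‖ ≤ ‖w‖ * (C * ‖v‖) :=
    (norm_inner_le_norm _ _).trans <| mul_le_mul_of_nonneg_left
      ((T g).le_opNorm v |>.trans <| by gcongr; exact hT g) (norm_nonneg w)
  refine IntegrableOn.of_bound hs (by fun_prop) (‖v₂‖ * (C * ‖v₁‖) * (‖v₄‖ * (C * ‖v₃‖)))
    (ae_of_all _ fun g => ?_)
  rw [norm_mul, Complex.norm_conj]
  exact mul_le_mul (hbound v₁ v₂ g) (hbound v₃ v₄ g) (norm_nonneg _)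
    ((norm_nonneg _).trans (hbound v₁ v₂ g))

variable {μ : Measure G} {T : G → E →L[ℂ] F} {S : α → Set G} {ρ : α → ℝ} {l : Filter α}
  {V : Submodule ℂ E} {W : Submodule ℂ F}

theorem tendsto_mixedLimit
    (hint : ∀ v₁ v₂ v₃ v₄, ∀ᶠ r in l,
      IntegrableOn (fun g => ⟪v₂, T g v₁⟫_ℂ * conj ⟪v₄, T g v₃⟫_ℂ) (S r) μ)
    (hsq : ∀ v ∈ V, ∀ w ∈ W, ∃ L : ℂ,
      Tendsto (fun r => ρ r • ∫ g in S r, (‖⟪w, T g v⟫_ℂ‖ : ℂ) ^ 2 ∂μ) l (𝓝 L))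
    {v₁ v₃ : E} {v₂ v₄ : F} (h₁ : v₁ ∈ V) (h₂ : v₂ ∈ W) (h₃ : v₃ ∈ V) (h₄ : v₄ ∈ W) :
    Tendsto (fun r => ρ r • ∫ g in S r, ⟪v₂, T g v₁⟫_ℂ * conj ⟪v₄, T g v₃⟫_ℂ ∂μ) l
      (𝓝 (mixedLimit μ T S ρ l v₁ v₂ v₃ v₄)) := by
  have hint_sq (v : E) (w : F) :
      ∀ᶠ r in l, IntegrableOn (fun g => (‖⟪w, T g v⟫_ℂ‖ : ℂ) ^ 2) (S r) μ := by
    simpa only [Complex.mul_conj'] using hint v w v w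
  choose L hL using fun a b : ℕ =>
    hsq _ (V.add_mem h₁ (V.smul_mem (I ^ a) h₃)) _ (W.add_mem h₂ (W.smul_mem (I ^ b) h₄))
  refine tendsto_nhds_limUnder
    ⟨16⁻¹ * ∑ a ∈ range 4, ∑ b ∈ range 4, I ^ a * conj (I ^ b) * L a b, ?_⟩
  simp_rw [inner_mul_conj_inner_eq_sum_norm_sq]
  refine (tendsto_smul_setIntegral_finsetSum _ (fun a _ => ?_)
    fun a _ => tendsto_smul_setIntegral_finsetSum _ (fun b _ => ?_)
      fun b _ => (hL a b).smul_setIntegral_const_mul _).smul_setIntegral_const_mul _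
  · filter_upwards [(eventually_all_finset _).2 fun b (_ : b ∈ range 4) => hint_sq
      (v₁ + I ^ a • v₃) (v₂ + I ^ b • v₄)] with r hr
    exact integrable_finsetSum _ fun b hb => (hr b hb).const_mul _
  · exact (hint_sq _ _).mono fun r hr => hr.const_mul _

theorem mixedLimit_smul_add_first [l.NeBot]
    (hint : ∀ v₁ v₂ v₃ v₄, ∀ᶠ r in l,
      IntegrableOn (fun g => ⟪v₂, T g v₁⟫_ℂ * conj ⟪v₄, T g v₃⟫_ℂ) (S r) μ)
    (hsq : ∀ v ∈ V, ∀ w ∈ W, ∃ L : ℂ,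
      Tendsto (fun r => ρ r • ∫ g in S r, (‖⟪w, T g v⟫_ℂ‖ : ℂ) ^ 2 ∂μ) l (𝓝 L))
    (c : ℂ) {v₁ w₁ v₃ : E} {v₂ v₄ : F} (h₁ : v₁ ∈ V) (hw₁ : w₁ ∈ V) (h₂ : v₂ ∈ W)
    (h₃ : v₃ ∈ V) (h₄ : v₄ ∈ W) :
    mixedLimit μ T S ρ l (c • v₁ + w₁) v₂ v₃ v₄ =
      c * mixedLimit μ T S ρ l v₁ v₂ v₃ v₄ + mixedLimit μ T S ρ l w₁ v₂ v₃ v₄ :=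
  eq_mul_add_of_tendsto_smul_setIntegral c
    (fun g => by simp only [map_add, map_smul, inner_add_right, inner_smul_right]; ring)
    (hint ..) (hint ..)
    (tendsto_mixedLimit hint hsq (V.add_mem (V.smul_mem c h₁) hw₁) h₂ h₃ h₄)
    (tendsto_mixedLimit hint hsq h₁ h₂ h₃ h₄) (tendsto_mixedLimit hint hsq hw₁ h₂ h₃ h₄)

theorem mixedLimit_smul_add_second [l.NeBot]
    (hint : ∀ v₁ v₂ v₃ v₄, ∀ᶠ r in l,
      IntegrableOn (fun g => ⟪v₂, T g v₁⟫_ℂ * conj ⟪v₄, T g v₃⟫_ℂ) (S r) μ)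
    (hsq : ∀ v ∈ V, ∀ w ∈ W, ∃ L : ℂ,
      Tendsto (fun r => ρ r • ∫ g in S r, (‖⟪w, T g v⟫_ℂ‖ : ℂ) ^ 2 ∂μ) l (𝓝 L))
    (c : ℂ) {v₁ v₃ : E} {v₂ w₂ v₄ : F} (h₁ : v₁ ∈ V) (h₂ : v₂ ∈ W) (hw₂ : w₂ ∈ W)
    (h₃ : v₃ ∈ V) (h₄ : v₄ ∈ W) :
    mixedLimit μ T S ρ l v₁ (c • v₂ + w₂) v₃ v₄ =
      conj c * mixedLimit μ T S ρ l v₁ v₂ v₃ v₄ + mixedLimit μ T S ρ l v₁ w₂ v₃ v₄ :=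
  eq_mul_add_of_tendsto_smul_setIntegral (conj c)
    (fun g => by simp only [inner_add_left, inner_smul_left]; ring)
    (hint ..) (hint ..)
    (tendsto_mixedLimit hint hsq h₁ (W.add_mem (W.smul_mem c h₂) hw₂) h₃ h₄)
    (tendsto_mixedLimit hint hsq h₁ h₂ h₃ h₄) (tendsto_mixedLimit hint hsq h₁ hw₂ h₃ h₄)

theorem mixedLimit_smul_add_third [l.NeBot]
    (hint : ∀ v₁ v₂ v₃ v₄, ∀ᶠ r in l,
      IntegrableOn (fun g => ⟪v₂, T g v₁⟫_ℂ * conj ⟪v₄, T g v₃⟫_ℂ) (S r) μ)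
    (hsq : ∀ v ∈ V, ∀ w ∈ W, ∃ L : ℂ,
      Tendsto (fun r => ρ r • ∫ g in S r, (‖⟪w, T g v⟫_ℂ‖ : ℂ) ^ 2 ∂μ) l (𝓝 L))
    (c : ℂ) {v₁ v₃ w₃ : E} {v₂ v₄ : F} (h₁ : v₁ ∈ V) (h₂ : v₂ ∈ W) (h₃ : v₃ ∈ V)
    (hw₃ : w₃ ∈ V) (h₄ : v₄ ∈ W) :
    mixedLimit μ T S ρ l v₁ v₂ (c • v₃ + w₃) v₄ =
      conj c * mixedLimit μ T S ρ l v₁ v₂ v₃ v₄ + mixedLimit μ T S ρ l v₁ v₂ w₃ v₄ :=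
  eq_mul_add_of_tendsto_smul_setIntegral (conj c)
    (fun g => by
      simp only [map_add, map_smul, inner_add_right, inner_smul_right, map_mul]; ring)
    (hint ..) (hint ..)
    (tendsto_mixedLimit hint hsq h₁ h₂ (V.add_mem (V.smul_mem c h₃) hw₃) h₄)
    (tendsto_mixedLimit hint hsq h₁ h₂ h₃ h₄) (tendsto_mixedLimit hint hsq h₁ h₂ hw₃ h₄)

theorem mixedLimit_smul_add_fourth [l.NeBot]
    (hint : ∀ v₁ v₂ v₃ v₄, ∀ᶠ r in l,
      IntegrableOn (fun g => ⟪v₂, T g v₁⟫_ℂ * conj ⟪v₄, T g v₃⟫_ℂ) (S r) μ)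
    (hsq : ∀ v ∈ V, ∀ w ∈ W, ∃ L : ℂ,
      Tendsto (fun r => ρ r • ∫ g in S r, (‖⟪w, T g v⟫_ℂ‖ : ℂ) ^ 2 ∂μ) l (𝓝 L))
    (c : ℂ) {v₁ v₃ : E} {v₂ v₄ w₄ : F} (h₁ : v₁ ∈ V) (h₂ : v₂ ∈ W) (h₃ : v₃ ∈ V)
    (h₄ : v₄ ∈ W) (hw₄ : w₄ ∈ W) :
    mixedLimit μ T S ρ l v₁ v₂ v₃ (c • v₄ + w₄) =
      c * mixedLimit μ T S ρ l v₁ v₂ v₃ v₄ + mixedLimit μ T S ρ l v₁ v₂ v₃ w₄ :=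
  eq_mul_add_of_tendsto_smul_setIntegral c
    (fun g => by simp only [inner_add_left, inner_smul_left, map_add, map_mul,
      Complex.conj_conj]; ring)
    (hint ..) (hint ..)
    (tendsto_mixedLimit hint hsq h₁ h₂ h₃ (W.add_mem (W.smul_mem c h₄) hw₄))
    (tendsto_mixedLimit hint hsq h₁ h₂ h₃ h₄) (tendsto_mixedLimit hint hsq h₁ h₂ h₃ hw₄)

end MixedLimit

/-- The paper's inner product `⟨x, y⟩`, linear in `x`, is Mathlib's `⟪y, x⟫_ℂ`. -/
theorem stmt2_general {G H : Type*} [Group G] [TopologicalSpace G]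
    [MeasurableSpace G] [BorelSpace G]
    (μ : Measure G)
    [NormedAddCommGroup H] [InnerProductSpace ℂ H]
    (π : G →* (H →L[ℂ] H))
    (hunit : ∀ (g : G) (u w : H), ⟪π g u, π g w⟫_ℂ = ⟪u, w⟫_ℂ)
    (hcont : ∀ u : H, Continuous fun g : G => π g u)
    (d : ℕ) (S : ℝ → Set G)
    (hSfin : ∀ r > (0 : ℝ), μ (S r) < ∞)
    (V : Submodule ℂ H)
    (hsq : ∀ v ∈ V, ∀ w ∈ V, ∃ L : ℂ,
      Tendsto (fun r : ℝ =>
          (r ^ d)⁻¹ • ∫ g in S r, ((‖⟪w, π g v⟫_ℂ‖ : ℂ) ^ 2) ∂μ)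
        atTop (𝓝 L)) :
    ∃ D : H → H → H → H → ℂ,
      (∀ v₁ ∈ V, ∀ v₂ ∈ V, ∀ v₃ ∈ V, ∀ v₄ ∈ V,
        Tendsto (fun r : ℝ =>
            (r ^ d)⁻¹ • ∫ g in S r, ⟪v₂, π g v₁⟫_ℂ * conj ⟪v₄, π g v₃⟫_ℂ ∂μ)
          atTop (𝓝 (D v₁ v₂ v₃ v₄))) ∧
      (∀ c : ℂ, ∀ v₁ ∈ V, ∀ w₁ ∈ V, ∀ v₂ ∈ V, ∀ v₃ ∈ V, ∀ v₄ ∈ V,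
        D (c • v₁ + w₁) v₂ v₃ v₄ = c * D v₁ v₂ v₃ v₄ + D w₁ v₂ v₃ v₄) ∧
      (∀ c : ℂ, ∀ v₁ ∈ V, ∀ v₂ ∈ V, ∀ w₂ ∈ V, ∀ v₃ ∈ V, ∀ v₄ ∈ V,
        D v₁ (c • v₂ + w₂) v₃ v₄ = conj c * D v₁ v₂ v₃ v₄ + D v₁ w₂ v₃ v₄) ∧
      (∀ c : ℂ, ∀ v₁ ∈ V, ∀ v₂ ∈ V, ∀ v₃ ∈ V, ∀ w₃ ∈ V, ∀ v₄ ∈ V,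
        D v₁ v₂ (c • v₃ + w₃) v₄ = conj c * D v₁ v₂ v₃ v₄ + D v₁ v₂ w₃ v₄) ∧
      (∀ c : ℂ, ∀ v₁ ∈ V, ∀ v₂ ∈ V, ∀ v₃ ∈ V, ∀ v₄ ∈ V, ∀ w₄ ∈ V,
        D v₁ v₂ v₃ (c • v₄ + w₄) = c * D v₁ v₂ v₃ v₄ + D v₁ v₂ v₃ w₄) := by
  have hπ (g : G) : ‖π g‖ ≤ 1 :=
    (π g).opNorm_le_bound zero_le_one fun v => by
      rw [one_mul, ← ((π g : H →ₗ[ℂ] H).isometryOfInner (hunit g)).norm_map v]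
      rfl
  have hint (v₁ v₂ v₃ v₄ : H) : ∀ᶠ r in atTop,
      IntegrableOn (fun g => ⟪v₂, π g v₁⟫_ℂ * conj ⟪v₄, π g v₃⟫_ℂ) (S r) μ :=
    (eventually_gt_atTop 0).mono fun r hr =>
      integrableOn_inner_mul_conj_inner hcont hπ (hSfin r hr) ..
  exact ⟨mixedLimit μ π S (fun r => (r ^ d)⁻¹) atTop,
    fun _ h₁ _ h₂ _ h₃ _ h₄ => tendsto_mixedLimit hint hsq h₁ h₂ h₃ h₄,
    fun c _ h₁ _ hw₁ _ h₂ _ h₃ _ h₄ => mixedLimit_smul_add_first hint hsq c h₁ hw₁ h₂ h₃ h₄,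
    fun c _ h₁ _ h₂ _ hw₂ _ h₃ _ h₄ => mixedLimit_smul_add_second hint hsq c h₁ h₂ hw₂ h₃ h₄,
    fun c _ h₁ _ h₂ _ h₃ _ hw₃ _ h₄ => mixedLimit_smul_add_third hint hsq c h₁ h₂ h₃ hw₃ h₄,
    fun c _ h₁ _ h₂ _ h₃ _ h₄ _ hw₄ => mixedLimit_smul_add_fourth hint hsq c h₁ h₂ h₃ h₄ hw₄⟩

/-- (Polarisation; Section 4.1 of the paper.) If for all `v, w` in a
subspace `V` the limits `lim_{r→∞} r^{-d} ∫_{S_r} |⟨π(g)v,w⟩|² dμ` exist, then the mixed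
limits `D(v₁,v₂,v₃,v₄) = lim_{r→∞} r^{-d} ∫_{S_r} ⟨π(g)v₁,v₂⟩ conj ⟨π(g)v₃,v₄⟩ dμ` exist on
`V`, and `D` is ℂ-linear in the first and fourth variables and conjugate-linear in the
second and third. The paper's inner product `⟨x,y⟩`, linear in the first variable, is
rendered as Mathlib's `⟪y, x⟫_ℂ`. -/
theorem stmt2 {G H : Type*} [Group G] [TopologicalSpace G] [IsTopologicalGroup G]
    [LocallyCompactSpace G] [SecondCountableTopology G]
    [MeasurableSpace G] [BorelSpace G]
    (μ : Measure G) [μ.IsHaarMeasure]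
    [NormedAddCommGroup H] [InnerProductSpace ℂ H]
    (π : G →* (H →L[ℂ] H))
    (hunit : ∀ (g : G) (u w : H), ⟪π g u, π g w⟫_ℂ = ⟪u, w⟫_ℂ)
    (hcont : ∀ u : H, Continuous fun g : G => π g u)
    (d : ℕ) (S : ℝ → Set G)
    (hSmeas : ∀ r > (0 : ℝ), MeasurableSet (S r))
    (hSfin : ∀ r > (0 : ℝ), μ (S r) < ∞)
    (V : Submodule ℂ H)
    (hsq : ∀ v ∈ V, ∀ w ∈ V, ∃ L : ℂ,
      Tendsto (fun r : ℝ =>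
          (r ^ d)⁻¹ • ∫ g in S r, ((‖⟪w, π g v⟫_ℂ‖ : ℂ) ^ 2) ∂μ)
        atTop (𝓝 L)) :
    ∃ D : H → H → H → H → ℂ,
      (∀ v₁ ∈ V, ∀ v₂ ∈ V, ∀ v₃ ∈ V, ∀ v₄ ∈ V,
        Tendsto (fun r : ℝ =>
            (r ^ d)⁻¹ • ∫ g in S r, ⟪v₂, π g v₁⟫_ℂ * conj ⟪v₄, π g v₃⟫_ℂ ∂μ)
          atTop (𝓝 (D v₁ v₂ v₃ v₄))) ∧
      (∀ c : ℂ, ∀ v₁ ∈ V, ∀ w₁ ∈ V, ∀ v₂ ∈ V, ∀ v₃ ∈ V, ∀ v₄ ∈ V,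
        D (c • v₁ + w₁) v₂ v₃ v₄ = c * D v₁ v₂ v₃ v₄ + D w₁ v₂ v₃ v₄) ∧
      (∀ c : ℂ, ∀ v₁ ∈ V, ∀ v₂ ∈ V, ∀ w₂ ∈ V, ∀ v₃ ∈ V, ∀ v₄ ∈ V,
        D v₁ (c • v₂ + w₂) v₃ v₄ = conj c * D v₁ v₂ v₃ v₄ + D v₁ w₂ v₃ v₄) ∧
      (∀ c : ℂ, ∀ v₁ ∈ V, ∀ v₂ ∈ V, ∀ v₃ ∈ V, ∀ w₃ ∈ V, ∀ v₄ ∈ V,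
        D v₁ v₂ (c • v₃ + w₃) v₄ = conj c * D v₁ v₂ v₃ v₄ + D v₁ v₂ w₃ v₄) ∧
      (∀ c : ℂ, ∀ v₁ ∈ V, ∀ v₂ ∈ V, ∀ v₃ ∈ V, ∀ v₄ ∈ V, ∀ w₄ ∈ V,
        D v₁ v₂ v₃ (c • v₄ + w₄) = c * D v₁ v₂ v₃ v₄ + D v₁ v₂ v₃ w₄) :=
  stmt2_general μ π hunit hcont d S hSfin V hsq
end

section
/- Let K be a topological group, let V be a finite-dimensional complex normed vector space, and let π : K → GL(V) be a group homomorphism into the ℂ-linear automorphisms of V. Let B : V × V → ℂ be sesquilinear (additive in each variable, ℂ-linear in the first variable, conjugate-linear in the second). Assume: (a) for every k ∈ K there exists a continuous group homomorphism γ : ℝ → K with γ(1) = k; (b) for every continuous group homomorphism γ : ℝ → K, the map t ↦ π(γ(t)), viewed as a map from ℝ to the space of linear endomorphisms of V, is differentiable on ℝ; and (c) for every such γ and all v, w ∈ V, the derivative at t = 0 of t ↦ B(π(γ(t))v, w) equals minus the derivative at t = 0 of t ↦ B(v, π(γ(t))w). Then B(π(k)v, π(k)w) = B(v, w) for every k ∈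 K and all v, w ∈ V. -/
open ComplexConjugate

/-!
Along a one-parameter subgroup `γ`, the function `t ↦ B(π(γ t) v, π(γ t) w)` has, at every
`t₀`, the same derivative as the corresponding function for the vectors `π(γ t₀) v`,
`π(γ t₀) w` at `0`; by the product rule and the skew-invariance that derivative vanishes.
So the function is constant, and `γ 1 = k` gives `B(π k v, π k w) = B(v, w)`.
-/

section OneParameterInvariance

variable {E F : Type*} [NormedAddCommGroup E] [NormedSpace ℝ E]
  [NormedAddCommGroup F] [NormedSpace ℝ F]
  (β : E →L[ℝ] E →L[ℝ] F) {U : ℝ → E → E}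

theorem deriv_bilinear_orbit_zero (hU_zero : ∀ v, U 0 v = v)
    (hU_diff : ∀ v, Differentiable ℝ fun t => U t v) (v w : E) :
    deriv (fun t => β (U t v) (U t w)) 0
      = deriv (fun t => β (U t v) w) 0 + deriv (fun t => β v (U t w)) 0 := by
  rw [β.deriv_of_bilinear (fun _ => hU_diff v 0) (fun _ => hU_diff w 0),
    β.deriv_of_bilinear (fun _ => hU_diff v 0) (fun _ => differentiableAt_const w),
    β.deriv_of_bilinear (fun _ => differentiableAt_const v) (fun _ => hU_diff w 0)]
  simp only [hU_zero, deriv_const, map_zero, zero_apply, add_zero, zero_add]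
  exact add_comm _ _

theorem bilinear_orbit_eq_of_deriv_skew (hU_add : ∀ s t v, U (s + t) v = U s (U t v))
    (hU_zero : ∀ v, U 0 v = v) (hU_diff : ∀ v, Differentiable ℝ fun t => U t v)
    (hskew : ∀ v w, deriv (fun t => β (U t v) w) 0 = -deriv (fun t => β v (U t w)) 0)
    (t : ℝ) (v w : E) : β (U t v) (U t w) = β v w := by
  have hshift : ∀ t₀, (fun t => β (U t v) (U t w))
      = fun t => β (U (t - t₀) (U t₀ v)) (U (t - t₀) (U t₀ w)) := by
    intro t₀
    funext t
    rw [← hU_add, ← hU_add, sub_add_cancel]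
  have hdiff : Differentiable ℝ fun t => β (U t v) (U t w) := fun t =>
    (β.hasDerivAt_of_bilinear (fun _ => (hU_diff v t).hasDerivAt)
      (fun _ => (hU_diff w t).hasDerivAt)).differentiableAt
  have hderiv : ∀ t₀, deriv (fun t => β (U t v) (U t w)) t₀ = 0 := by
    intro t₀
    rw [hshift t₀, deriv_comp_sub_const (f := fun s => β (U s (U t₀ v)) (U s (U t₀ w))),
      sub_self, deriv_bilinear_orbit_zero β hU_zero hU_diff, hskew, neg_add_cancel]
  simpa [hU_zero] using is_const_of_deriv_eq_zero hdiff hderiv t 0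

end OneParameterInvariance

section Sesquilinear

variable {V W : Type*} [NormedAddCommGroup V] [NormedSpace ℂ V]
  [NormedAddCommGroup W] [NormedSpace ℂ W]

noncomputable def sesqFormToRealCLM [FiniteDimensional ℂ V] (B : V → V → ℂ)
    (hadd₁ : ∀ v v' w : V, B (v + v') w = B v w + B v' w)
    (hadd₂ : ∀ v w w' : V, B v (w + w') = B v w + B v w')
    (hsmul₁ : ∀ (c : ℂ) (v w : V), B (c • v) w = c * B v w)
    (hsmul₂ : ∀ (c : ℂ) (v w : V), B v (c • w) = conj c * B v w) :
    V →L[ℝ] V →L[ℝ] ℂ :=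
  LinearMap.toContinuousLinearMap <| LinearMap.toContinuousLinearMap.toLinearMap ∘ₗ
    LinearMap.mk₂ ℝ B hadd₁
      (fun r v w => by rw [← Complex.coe_smul, hsmul₁, Complex.real_smul]) hadd₂
      (fun r v w => by rw [← Complex.coe_smul, hsmul₂, Complex.conj_ofReal, Complex.real_smul])

theorem Differentiable.complexCLM_apply {Φ : ℝ → V →L[ℂ] W}
    (hΦ : Differentiable ℝ Φ) (v : V) : Differentiable ℝ fun t => Φ t v :=
  ((ContinuousLinearMap.apply ℂ W v).restrictScalars ℝ).differentiable.comp hΦ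

end Sesquilinear

theorem stmt7_general {K V : Type*} [Group K] [TopologicalSpace K]
    [NormedAddCommGroup V] [NormedSpace ℂ V] [FiniteDimensional ℂ V]
    (π : K →* (V ≃ₗ[ℂ] V))
    (B : V → V → ℂ)
    (hadd₁ : ∀ v v' w : V, B (v + v') w = B v w + B v' w)
    (hadd₂ : ∀ v w w' : V, B v (w + w') = B v w + B v w')
    (hsmul₁ : ∀ (c : ℂ) (v w : V), B (c • v) w = c * B v w)
    (hsmul₂ : ∀ (c : ℂ) (v w : V), B v (c • w) = conj c * B v w)
    (hone : ∀ k : K, ∃ γ : ℝ → K,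
      Continuous γ ∧ (∀ s t : ℝ, γ (s + t) = γ s * γ t) ∧ γ 1 = k)
    (hdiff : ∀ γ : ℝ → K, Continuous γ → (∀ s t : ℝ, γ (s + t) = γ s * γ t) →
      Differentiable ℝ fun t : ℝ =>
        LinearMap.toContinuousLinearMap (π (γ t)).toLinearMap)
    (hskew : ∀ γ : ℝ → K, Continuous γ → (∀ s t : ℝ, γ (s + t) = γ s * γ t) →
      ∀ v w : V,
        deriv (fun t : ℝ => B (π (γ t) v) w) 0
          = -deriv (fun t : ℝ => B v (π (γ t) w)) 0) :
    ∀ (k : K) (v w : V), B (π k v) (π k w) = B v w := by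
  intro k v w
  obtain ⟨γ, hγ_cont, hγ_add, rfl⟩ := hone k
  have hγ_zero : γ 0 = 1 := (mul_eq_left (a := γ 0)).mp (by rw [← hγ_add, add_zero])
  exact bilinear_orbit_eq_of_deriv_skew (sesqFormToRealCLM B hadd₁ hadd₂ hsmul₁ hsmul₂)
    (U := fun t => π (γ t)) (fun s t u => by rw [hγ_add, map_mul, LinearEquiv.mul_apply])
    (fun u => by rw [hγ_zero, map_one]; rfl)
    ((hdiff γ hγ_cont hγ_add).complexCLM_apply) (hskew γ hγ_cont hγ_add) 1 v w

/-- (Analytic content of Proposition 2.14.) Let `π` be a representation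
of a topological group `K` by ℂ-linear automorphisms of a finite-dimensional complex
normed space `V`, such that every element of `K` lies on a continuous one-parameter
subgroup, `t ↦ π(γ(t))` is differentiable for every such subgroup `γ`, and a sesquilinear
form `B` is infinitesimally skew-invariant along every such subgroup. Then `B` is
`K`-invariant. -/
theorem stmt7 {K V : Type*} [Group K] [TopologicalSpace K] [IsTopologicalGroup K]
    [NormedAddCommGroup V] [NormedSpace ℂ V] [FiniteDimensional ℂ V]
    (π : K →* (V ≃ₗ[ℂ] V))
    (B : V → V → ℂ)
    (hadd₁ : ∀ v v' w : V, B (v + v') w = B v w + B v' w)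
    (hadd₂ : ∀ v w w' : V, B v (w + w') = B v w + B v w')
    (hsmul₁ : ∀ (c : ℂ) (v w : V), B (c • v) w = c * B v w)
    (hsmul₂ : ∀ (c : ℂ) (v w : V), B v (c • w) = conj c * B v w)
    (hone : ∀ k : K, ∃ γ : ℝ → K,
      Continuous γ ∧ (∀ s t : ℝ, γ (s + t) = γ s * γ t) ∧ γ 1 = k)
    (hdiff : ∀ γ : ℝ → K, Continuous γ → (∀ s t : ℝ, γ (s + t) = γ s * γ t) →
      Differentiable ℝ fun t : ℝ =>
        LinearMap.toContinuousLinearMap (π (γ t)).toLinearMap)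
    (hskew : ∀ γ : ℝ → K, Continuous γ → (∀ s t : ℝ, γ (s + t) = γ s * γ t) →
      ∀ v w : V,
        deriv (fun t : ℝ => B (π (γ t) v) w) 0
          = -deriv (fun t : ℝ => B v (π (γ t) w)) 0) :
    ∀ (k : K) (v w : V), B (π k v) (π k w) = B v w :=
  stmt7_general π B hadd₁ hadd₂ hsmul₁ hsmul₂ hone hdiff hskew
end
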